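/- Let n ≥ 4 be an integer. Let K^n denote the full subposet of {0,…,n−2} × {0,…,n−2} whose elements are the pairs (i,j) with |i−j| = 1 and (i,j) ≠ (0,1), together with (1,1) and (n−2,n−2). Define u : Ã(n−1,2) × [1] → K^n by u(x,y,z) = (x+1, y+1), except u(0,0,0) = (1,0). Then: (1) u is a well-defined monotone (i.e., functorial) surjection; and (2) for every (x,y) ∈ Ã(n−1,2), the object ((x,y,1), 𝟙_{u(x,y,1)}) is a terminal object of the comma category u ↓ u(x,y,1); equivalently, for every p′ ∈ Ã(n−1,2) × [1], u(p′) ≤ u(x,y,1) implies p′ ≤ (x,y,1). (This is the combinatorial core of the Fourth step of the proof of the main theorem, showing that u is a homotopical epimorphism.) -/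

import Mathlib

/-!
The combinatorial core of the Fourth step of the proof of the main theorem: the map
`u : Ã(n-1,2) × [1] → K^n`, `u(x,y,z) = (x+1,y+1)` except `u(0,0,0) = (1,0)`, is a
well-defined monotone surjection, and for every `(x,y)` the object `((x,y,1), id)` is
terminal in the slice `u ↓ u(x,y,1)`.
-/

open CategoryTheory

/-- The poset `Ã(n,2)`: the full subposet of `{0,…,n-2} × {0,…,n-2}` (componentwise order)
on the pairs `(i,j)` with `|i - j| = 1` together with `(0,0)` and `(n-2,n-2)`. -/
def Atilde (n : ℕ) : Type :=
  {p : Fin (n - 1) × Fin (n - 1) //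
    (p.1.val + 1 = p.2.val ∨ p.2.val + 1 = p.1.val) ∨
      (p.1.val = 0 ∧ p.2.val = 0) ∨ (p.1.val = n - 2 ∧ p.2.val = n - 2)}

instance (n : ℕ) : PartialOrder (Atilde n) :=
  inferInstanceAs (PartialOrder {p : Fin (n - 1) × Fin (n - 1) //
    (p.1.val + 1 = p.2.val ∨ p.2.val + 1 = p.1.val) ∨
      (p.1.val = 0 ∧ p.2.val = 0) ∨ (p.1.val = n - 2 ∧ p.2.val = n - 2)})

/-- The poset `K^n`: the full subposet of `{0,…,n-2} × {0,…,n-2}` on the pairs `(i,j)`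
with `|i - j| = 1` and `(i,j) ≠ (0,1)`, together with `(1,1)` and `(n-2,n-2)`. -/
def Kposet (n : ℕ) : Type :=
  {p : Fin (n - 1) × Fin (n - 1) //
    ((p.1.val + 1 = p.2.val ∨ p.2.val + 1 = p.1.val) ∧ ¬(p.1.val = 0 ∧ p.2.val = 1)) ∨
      (p.1.val = 1 ∧ p.2.val = 1) ∨ (p.1.val = n - 2 ∧ p.2.val = n - 2)}

instance (n : ℕ) : PartialOrder (Kposet n) :=
  inferInstanceAs (PartialOrder {p : Fin (n - 1) × Fin (n - 1) //
    ((p.1.val + 1 = p.2.val ∨ p.2.val + 1 = p.1.val) ∧ ¬(p.1.val = 0 ∧ p.2.val = 1)) ∨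
      (p.1.val = 1 ∧ p.2.val = 1) ∨ (p.1.val = n - 2 ∧ p.2.val = n - 2)})

/-- The map `u : Ã(n-1,2) × [1] → K^n` defined by `u(x,y,z) = (x+1, y+1)`, except that
`u(0,0,0) = (1,0)`. -/
def uFun (n : ℕ) (hn : 4 ≤ n) (p : Atilde (n - 1) × Fin 2) : Kposet n :=
  if h : p.1.val.1.val = 0 ∧ p.1.val.2.val = 0 ∧ p.2 = (0 : Fin 2) then
    ⟨(⟨1, by omega⟩, ⟨0, by omega⟩),
      Or.inl ⟨Or.inr (show (0 : ℕ) + 1 = 1 from rfl),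
        show ¬((1 : ℕ) = 0 ∧ (0 : ℕ) = 1) by omega⟩⟩
  else
    ⟨(⟨p.1.val.1.val + 1, by have := p.1.val.1.isLt; omega⟩,
      ⟨p.1.val.2.val + 1, by have := p.1.val.2.isLt; omega⟩),
      by
        rcases p.1.property with (h1 | h1) | (h1 | h1)
        · exact Or.inl ⟨Or.inl (show p.1.val.1.val + 1 + 1 = p.1.val.2.val + 1 by omega),
            show ¬(p.1.val.1.val + 1 = 0 ∧ p.1.val.2.val + 1 = 1) by omega⟩
        · exact Or.inl ⟨Or.inr (show p.1.val.2.val + 1 + 1 = p.1.val.1.val + 1 by omega),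
            show ¬(p.1.val.1.val + 1 = 0 ∧ p.1.val.2.val + 1 = 1) by omega⟩
        · exact Or.inr (Or.inl
            (show p.1.val.1.val + 1 = 1 ∧ p.1.val.2.val + 1 = 1 by omega))
        · exact Or.inr (Or.inr
            (show p.1.val.1.val + 1 = n - 2 ∧ p.1.val.2.val + 1 = n - 2 by omega))⟩

lemma Kposet.le_iff (n : ℕ) (a b : Kposet n) :
    a ≤ b ↔ a.1.1.1 ≤ b.1.1.1 ∧ a.1.2.1 ≤ b.1.2.1 := by
  rfl

lemma Atilde.le_iff (n : ℕ) (a b : Atilde n) :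
    a ≤ b ↔ a.1.1.1 ≤ b.1.1.1 ∧ a.1.2.1 ≤ b.1.2.1 := by
  rfl

lemma Prod.le_iff' (n : ℕ) (a b : Atilde n × Fin 2) :
    a ≤ b ↔ a.1 ≤ b.1 ∧ a.2.1 ≤ b.2.1 := by
  rfl

lemma uFun_spec (n : ℕ) (hn : 4 ≤ n) (p : Atilde (n - 1) × Fin 2) :
    ((p.1.val.1.val = 0 ∧ p.1.val.2.val = 0 ∧ p.2 = (0 : Fin 2)) ∧
      (uFun n hn p).1.1.1 = 1 ∧ (uFun n hn p).1.2.1 = 0) ∨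
    (¬(p.1.val.1.val = 0 ∧ p.1.val.2.val = 0 ∧ p.2 = (0 : Fin 2)) ∧
      (uFun n hn p).1.1.1 = p.1.val.1.val + 1 ∧ (uFun n hn p).1.2.1 = p.1.val.2.val + 1) := by
  by_cases h : p.1.val.1.val = 0 ∧ p.1.val.2.val = 0 ∧ p.2 = (0 : Fin 2)
  · have e : uFun n hn p = _ := dif_pos h
    exact Or.inl ⟨h, congrArg (fun x : Kposet n => x.1.1.1) e,
      congrArg (fun x : Kposet n => x.1.2.1) e⟩
  · have e : uFun n hn p = _ := dif_neg h
    exact Or.inr ⟨h, congrArg (fun x : Kposet n => x.1.1.1) e,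
      congrArg (fun x : Kposet n => x.1.2.1) e⟩


/-- The Fourth step of the proof of the main theorem: `u` is a well-defined monotone
surjection, and for every `x ∈ Ã(n-1,2)` the object `((x,1), id)` is terminal in the
slice category `u ↓ u(x,1)`, i.e. `u(p') ≤ u(x,1)` implies `p' ≤ (x,1)`. -/
theorem uFun_monotone_surjective_slice_terminal (n : ℕ) (hn : 4 ≤ n) :
    (Monotone (uFun n hn) ∧ Function.Surjective (uFun n hn)) ∧
      (∀ (x : Atilde (n - 1)) (p' : Atilde (n - 1) × Fin 2),
        uFun n hn p' ≤ uFun n hn (x, (1 : Fin 2)) → p' ≤ (x, (1 : Fin 2))) := by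
  refine ⟨⟨?_, ?_⟩, ?_⟩
  · intro p q hpq
    obtain ⟨h1, h2⟩ := (Prod.le_iff' _ p q).mp hpq
    obtain ⟨ha, hb⟩ := (Atilde.le_iff _ p.1 q.1).mp h1
    rw [Kposet.le_iff]
    rcases uFun_spec n hn p with ⟨hp, e1, e2⟩ | ⟨hp, e1, e2⟩ <;>
      rcases uFun_spec n hn q with ⟨hq, f1, f2⟩ | ⟨hq, f1, f2⟩ <;>
      simp only [Fin.ext_iff, Fin.val_zero] at hp hq ⊢ <;> omega
  · intro k
    by_cases hk : k.1.1.val = 1 ∧ k.1.2.val = 0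
    · refine ⟨(⟨(⟨0, by omega⟩, ⟨0, by omega⟩), Or.inr (Or.inl ⟨rfl, rfl⟩)⟩, 0), ?_⟩
      unfold uFun
      simp only [eq_self_iff_true, and_self, dite_true]
      apply Subtype.ext
      apply Prod.ext <;> apply Fin.ext <;> simp <;> omega
    · have hk1 : 1 ≤ k.1.1.val := by
        rcases k.2 with ⟨h, h'⟩ | ⟨h, h'⟩ | ⟨h, h'⟩ <;> omega
      have hk2 : 1 ≤ k.1.2.val := by
        rcases k.2 with ⟨h, h'⟩ | ⟨h, h'⟩ | ⟨h, h'⟩ <;> omega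
      have hlt1 := k.1.1.isLt
      have hlt2 := k.1.2.isLt
      refine ⟨(⟨(⟨k.1.1.val - 1, by omega⟩, ⟨k.1.2.val - 1, by omega⟩), ?_⟩, 1), ?_⟩
      · dsimp only
        rcases k.2 with ⟨h, h'⟩ | ⟨h, h'⟩ | ⟨h, h'⟩
        · rcases h with h | h
          · exact Or.inl (Or.inl (by omega))
          · exact Or.inl (Or.inr (by omega))
        · exact Or.inr (Or.inl (by omega))
        · exact Or.inr (Or.inr (by omega))
      · unfold uFun
        simp only [Fin.ext_iff, Fin.val_one, Fin.val_zero, one_ne_zero, and_false, dite_false]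
        apply Subtype.ext
        apply Prod.ext <;> apply Fin.ext <;> simp <;> omega
  · intro x p' h
    rw [Prod.le_iff', Atilde.le_iff]
    rw [Kposet.le_iff] at h
    show (p'.1.val.1.val ≤ x.val.1.val ∧ p'.1.val.2.val ≤ x.val.2.val) ∧
      p'.2.val ≤ (1 : Fin 2).val
    have hx1 : (x, (1 : Fin 2)).1.val.1.val = x.val.1.val := rfl
    have hx2 : (x, (1 : Fin 2)).1.val.2.val = x.val.2.val := rfl
    rcases uFun_spec n hn p' with ⟨hp, e1, e2⟩ | ⟨hp, e1, e2⟩ <;>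
      rcases uFun_spec n hn (x, (1 : Fin 2)) with ⟨hq, f1, f2⟩ | ⟨hq, f1, f2⟩ <;>
      simp only [Fin.ext_iff, Fin.val_zero, Fin.val_one] at hp hq ⊢ <;>
      (refine ⟨⟨?_, ?_⟩, ?_⟩ <;> omega)
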